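/- For the decoherence functional on Ω = {h₁, h₂, h₃} defined by the matrix D = [[1/3, −7/24, 7/24], [−7/24, 1/2, −7/24], [7/24, −7/24, 3/4]] (extended biadditively to subsets), the partition C₁ = {{h₁}, {h₂,h₃}} is consistent (D({h₁},{h₂,h₃}) = 0) with cell measures 1/3 and 2/3, the partition C₂ = {{h₁,h₂}, {h₃}} is consistent with cell measures 1/4 and 3/4, and C₁ is not ordered: {h₁} and {h₁,h₂} are both consistent histories, {h₁} ⊆ {h₁,h₂}, yet μ({h₁}) = 1/3 > 1/4 = μ({h₁,h₂}). -/

import Mathlib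

/-- The decoherence functional matrix of the example in the appendix. -/
noncomputable def exampleM : Matrix (Fin 3) (Fin 3) ℝ :=
  !![1/3, -7/24, 7/24; -7/24, 1/2, -7/24; 7/24, -7/24, 3/4]

/-- The decoherence functional extended biadditively to subsets. -/
noncomputable def exampleD (A B : Finset (Fin 3)) : ℝ :=
  ∑ i ∈ A, ∑ j ∈ B, exampleM i j

/-- The quantum measure. -/
noncomputable def exampleMu (A : Finset (Fin 3)) : ℝ := exampleD A A

/-- A history is consistent if it decoheres with its complement. -/
def exampleConsistent (H : Finset (Fin 3)) : Prop := exampleD H Hᶜ = 0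

/-! The off-diagonal entries `∓7/24` cancel in `D({h₁}, {h₂, h₃})` and in `D({h₁, h₂}, {h₃})`,
so both two-cell partitions are consistent; but the negative interference `2 · (-7/24)` between
`h₁` and `h₂` makes `μ({h₁, h₂}) = 1/3 + 1/2 - 7/12 = 1/4` smaller than `μ({h₁}) = 1/3`. -/

lemma exampleD_zero_oneTwo : exampleD {0} {1, 2} = 0 := by
  simp [exampleD, exampleM, Finset.sum_insert]; norm_num

lemma exampleD_zeroOne_two : exampleD {0, 1} {2} = 0 := by
  simp [exampleD, exampleM, Finset.sum_insert]; norm_num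

lemma exampleMu_zero : exampleMu {0} = 1 / 3 := by
  simp [exampleMu, exampleD, exampleM]

lemma exampleMu_oneTwo : exampleMu {1, 2} = 2 / 3 := by
  simp [exampleMu, exampleD, exampleM, Finset.sum_insert]; norm_num

lemma exampleMu_zeroOne : exampleMu {0, 1} = 1 / 4 := by
  simp [exampleMu, exampleD, exampleM, Finset.sum_insert]; norm_num

lemma exampleMu_two : exampleMu {2} = 3 / 4 := by
  simp [exampleMu, exampleD, exampleM]

lemma exampleConsistent_zero : exampleConsistent {0} := by
  rw [exampleConsistent, show ({0} : Finset (Fin 3))ᶜ = {1, 2} by decide]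
  exact exampleD_zero_oneTwo

lemma exampleConsistent_zeroOne : exampleConsistent {0, 1} := by
  rw [exampleConsistent, show ({0, 1} : Finset (Fin 3))ᶜ = {2} by decide]
  exact exampleD_zeroOne_two

theorem example_PCS_not_OCS :
    exampleD {0} {1, 2} = 0 ∧ exampleMu {0} = 1/3 ∧ exampleMu {1, 2} = 2/3 ∧
      exampleD {0, 1} {2} = 0 ∧ exampleMu {0, 1} = 1/4 ∧ exampleMu {2} = 3/4 ∧
      exampleConsistent {0} ∧ exampleConsistent {0, 1} ∧
      ({0} : Finset (Fin 3)) ⊆ {0, 1} ∧ exampleMu {0, 1} < exampleMu {0} := by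
  refine ⟨exampleD_zero_oneTwo, exampleMu_zero, exampleMu_oneTwo, exampleD_zeroOne_two,
    exampleMu_zeroOne, exampleMu_two, exampleConsistent_zero, exampleConsistent_zeroOne,
    by decide, ?_⟩
  rw [exampleMu_zeroOne, exampleMu_zero]
  norm_num
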